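/- arXiv:2602.14822 — 8 statements merged into one kernel-verified Lean document; each statement's English description precedes it below -/
import Mathlib

section
/- Let f(x)=Σ f_n x^n and g(x)=Σ g_n x^n be formal power series over a field with f_0≠0 and g_0≠0, and let d_{i,j}=[x^i] (f/g)·(x/g)^j be the entries of the Riordan matrix T(f|g). Define the n-th diagonal generating function Δ_n(x)=Σ_{k≥0} d_{k+n,k} x^k. Then for all n≥0, (g_0 - x)·Δ_n(x) = f_n - Σ_{ℓ=1}^{n} g_ℓ·Δ_{n-ℓ}(x) in the field of formal power series (the n=0 case reading (g_0-x)Δ_0(x)=f_0). -/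
open PowerSeries

/-- The recurrence for the diagonals of a Riordan matrix `T(f|g)`:
`(g₀ - x)·Δₙ(x) = fₙ - Σ_{ℓ=1}^{n} g_ℓ·Δ_{n-ℓ}(x)`. -/
theorem diagonal_recurrence {K : Type*} [Field K] (f g : PowerSeries K)
    (hf : constantCoeff f ≠ 0) (hg : constantCoeff g ≠ 0)
    (d : ℕ → ℕ → K)
    (hd : ∀ i j, d i j = coeff i ((f * g⁻¹) * (X * g⁻¹) ^ j))
    (Δ : ℕ → PowerSeries K)
    (hΔ : ∀ n, Δ n = PowerSeries.mk fun k => d (k + n) k) :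
    ∀ n : ℕ, (C (coeff 0 g) - X) * Δ n
      = C (coeff n f) - ∑ l ∈ Finset.Icc 1 n, C (coeff l g) * Δ (n - l) := by
  have hgu : g * g⁻¹ = 1 := PowerSeries.mul_inv_cancel g hg
  have htri : ∀ i j, i < j → d i j = 0 := by
    intro i j hij
    rw [hd]
    have h1 : (f * g⁻¹) * (X * g⁻¹) ^ j = X ^ j * ((f * g⁻¹) * (g⁻¹) ^ j) := by
      rw [mul_pow]; ring
    rw [h1, PowerSeries.coeff_mul]
    apply Finset.sum_eq_zero
    intro p hp
    rw [Finset.HasAntidiagonal.mem_antidiagonal] at hp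
    rw [PowerSeries.coeff_X_pow]
    have : p.1 ≠ j := by omega
    simp [this]
  have key : ∀ i j, ∑ l ∈ Finset.range (i+1), coeff l g * d (i-l) j
      = coeff i (f * (X * g⁻¹) ^ j) := by
    intro i j
    have h1 : f * (X * g⁻¹) ^ j = g * ((f * g⁻¹) * (X * g⁻¹) ^ j) := by
      have : g * ((f * g⁻¹) * (X * g⁻¹) ^ j) = (g * g⁻¹) * (f * (X * g⁻¹) ^ j) := by ring
      rw [this, hgu, one_mul]
    rw [h1, PowerSeries.coeff_mul,
      Finset.Nat.sum_antidiagonal_eq_sum_range_succ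
        (fun a b => coeff a g * coeff b ((f * g⁻¹) * (X * g⁻¹) ^ j))]
    apply Finset.sum_congr rfl
    intro l hl
    rw [hd]
  have master : ∀ k n : ℕ, coeff 0 g * d (k+n) k
      + ∑ l ∈ Finset.Icc 1 n, coeff l g * d (k + (n - l)) k
      = coeff (k+n) (f * (X * g⁻¹) ^ k) := by
    intro k n
    rw [← key (k+n) k]
    rw [← Finset.sum_subset (Finset.range_subset_range.2 (by omega : n+1 ≤ k+n+1))]
    · rw [Finset.sum_range_succ']
      have h2 : ∑ l ∈ Finset.Icc 1 n, coeff l g * d (k + (n - l)) k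
          = ∑ i ∈ Finset.range n, coeff (i+1) g * d (k+n-(i+1)) k := by
        rw [← Finset.Ico_add_one_right_eq_Icc, Finset.sum_Ico_eq_sum_range]
        apply Finset.sum_congr rfl
        intro i hi
        rw [Finset.mem_range] at hi
        have e2 : k + (n - (1+i)) = k + n - (i+1) := by omega
        rw [e2, add_comm 1 i]
      rw [h2]
      simp only [Nat.sub_zero]
      ring
    · intro l hl hnl
      rw [Finset.mem_range] at hl hnl
      have : k + n - l < k := by omega
      rw [htri _ _ this, mul_zero]
  intro n
  ext k
  have hm := master k n
  simp only [sub_mul, map_sub, map_sum, PowerSeries.coeff_C_mul, hΔ, PowerSeries.coeff_mk,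
    PowerSeries.coeff_C]
  rcases k with _ | m
  · rw [PowerSeries.coeff_zero_X_mul]
    simp only [pow_zero, mul_one, zero_add] at hm
    simp only [eq_self_iff_true, if_true, zero_add]
    linear_combination hm
  · rw [PowerSeries.coeff_succ_X_mul]
    simp only [PowerSeries.coeff_mk, Nat.succ_ne_zero, if_false]
    have hr : coeff (m+1+n) (f * (X*g⁻¹)^(m+1)) = d (m+n) m := by
      have h1 : f * (X*g⁻¹)^(m+1) = X * ((f*g⁻¹) * (X*g⁻¹)^m) := by
        rw [pow_succ]; ring
      have h2 : m+1+n = (m+n)+1 := by omega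
      rw [h1, h2, PowerSeries.coeff_succ_X_mul, ← hd]
    rw [hr] at hm
    linear_combination hm
end

section
/- With the notation of the diagonal generating functions Δ_n(x) of a Riordan matrix T(f|g), the bivariate generating function Δ(z,x)=Σ_{n≥0} Δ_n(x) z^n satisfies (g(z)-x)·Δ(z,x)=f(z), i.e. Δ(z,x)=f(z)/(g(z)-x) in K[[x]][[z]]. -/
open PowerSeries

/-- The bivariate generating function of the diagonals of a Riordan matrix `T(f|g)`
satisfies `(g(z) - x)·Δ(z,x) = f(z)` in `K[[x]][[z]]`. -/
theorem diagonal_bivariate {K : Type*} [Field K] (f g : PowerSeries K)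
    (hf : constantCoeff f ≠ 0) (hg : constantCoeff g ≠ 0)
    (d : ℕ → ℕ → K)
    (hd : ∀ i j, d i j = coeff i ((f * g⁻¹) * (X * g⁻¹) ^ j))
    (Δ : ℕ → PowerSeries K)
    (hΔ : ∀ n, Δ n = PowerSeries.mk fun k => d (k + n) k)
    (Δbi : PowerSeries (PowerSeries K))
    (hΔbi : Δbi = PowerSeries.mk fun n => Δ n) :
    (PowerSeries.map (C : K →+* PowerSeries K) g - (C : PowerSeries K →+* PowerSeries (PowerSeries K)) X) * Δbi = PowerSeries.map (C : K →+* PowerSeries K) f := by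
  have ginv : g * g⁻¹ = 1 := PowerSeries.mul_inv_cancel g hg
  have key : ∀ m k, d (k + m) k = coeff m (f * g⁻¹ ^ (k + 1)) := by
    intro m k
    rw [hd]
    have h1 : (f * g⁻¹) * (X * g⁻¹) ^ k = X ^ k * (f * g⁻¹ ^ (k + 1)) := by
      rw [mul_pow, pow_succ]; ring
    rw [h1, show k + m = m + k from add_comm k m, coeff_X_pow_mul]
  have key2 : ∀ n k : ℕ, (∑ p ∈ Finset.HasAntidiagonal.antidiagonal n,
      coeff p.1 g * coeff p.2 (f * g⁻¹ ^ (k + 1))) = coeff n (f * g⁻¹ ^ k) := by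
    intro n k
    have h2 : g * (f * g⁻¹ ^ (k + 1)) = f * g⁻¹ ^ k := by
      calc g * (f * g⁻¹ ^ (k + 1)) = f * g⁻¹ ^ k * (g * g⁻¹) := by rw [pow_succ]; ring
      _ = f * g⁻¹ ^ k := by rw [ginv, mul_one]
    rw [← h2, coeff_mul]
  ext n k
  rw [sub_mul, map_sub, coeff_mul, coeff_C_mul, coeff_map]
  simp only [map_sub, map_sum, coeff_map, hΔbi, coeff_mk, coeff_C_mul, hΔ, key, key2, coeff_C]
  cases k with
  | zero =>
      simp [pow_zero, mul_one, coeff_zero_X_mul]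
  | succ k =>
      simp only [coeff_succ_X_mul, coeff_mk, key, Nat.succ_ne_zero, if_false]
      ring
end

section
/- Let C(z)=Σ C_n z^n be the generating function of the Catalan numbers, satisfying C(z)=1+zC(z)^2, and let g(z)=1/C(z). Then the diagonal generating functions of the Catalan Riordan matrix T(1|g) satisfy Δ_0(x)=1/(1-x) and, for n≥1, (1-x)·Δ_n(x)=Σ_{ℓ=1}^{n} C_{ℓ-1}·Δ_{n-ℓ}(x). -/
open PowerSeries

/-- The diagonals of the Catalan Riordan matrix `T(1|g)`, `g = 1/C(z)`, satisfy
`Δ₀(x) = 1/(1-x)` and `(1-x)·Δₙ(x) = Σ_{ℓ=1}^n C_{ℓ-1}·Δ_{n-ℓ}(x)` for `n ≥ 1`. -/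
theorem catalan_diagonal {K : Type*} [Field K] (Cat : PowerSeries K)
    (hCat0 : constantCoeff Cat = 1)
    (hCat : Cat = 1 + X * Cat ^ 2)
    (g : PowerSeries K) (hg : g = Cat⁻¹)
    (d : ℕ → ℕ → K)
    (hd : ∀ i j, d i j = coeff i (g⁻¹ * (X * g⁻¹) ^ j))
    (Δ : ℕ → PowerSeries K)
    (hΔ : ∀ n, Δ n = PowerSeries.mk fun k => d (k + n) k) :
    Δ 0 = (1 - X : PowerSeries K)⁻¹ ∧
      ∀ n : ℕ, 1 ≤ n →
        (1 - X : PowerSeries K) * Δ n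
          = ∑ l ∈ Finset.Icc 1 n, C (coeff (l - 1) Cat) * Δ (n - l) := by
  have hC0 : constantCoeff Cat ≠ 0 := by rw [hCat0]; exact one_ne_zero
  have hginv : g⁻¹ = Cat := by
    rw [hg, PowerSeries.inv_eq_iff_mul_eq_one, PowerSeries.mul_inv_cancel _ hC0]
    rw [PowerSeries.constantCoeff_inv, hCat0]; simp
  -- the diagonal entries
  have hdd : ∀ n k, d (k + n) k = coeff n (Cat ^ (k + 1)) := by
    intro n k
    rw [hd, hginv]
    have h2 : Cat * (X * Cat) ^ k = X ^ k * Cat ^ (k + 1) := by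
      rw [mul_pow]; ring
    rw [h2, add_comm k n, coeff_X_pow_mul]
  have hone : ∀ k, coeff k (Δ 0) = 1 := by
    intro k
    rw [hΔ, coeff_mk, hdd 0 k, coeff_zero_eq_constantCoeff, map_pow, hCat0, one_pow]
  have h1 : Cat - 1 = X * Cat ^ 2 := by nth_rewrite 1 [hCat]; ring
  have hpow : ∀ j : ℕ, Cat ^ (j + 2) - Cat ^ (j + 1) = X * Cat ^ (j + 3) := by
    intro j
    calc Cat ^ (j + 2) - Cat ^ (j + 1) = Cat ^ (j + 1) * (Cat - 1) := by ring
      _ = Cat ^ (j + 1) * (X * Cat ^ 2) := by rw [h1]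
      _ = X * Cat ^ (j + 3) := by ring
  constructor
  · rw [eq_comm, PowerSeries.inv_eq_iff_mul_eq_one (by simp)]
    ext k
    rw [mul_sub, mul_one, map_sub]
    cases k with
    | zero => simp [hone]
    | succ j => rw [coeff_succ_mul_X, hone, hone]; simp
  · intro n hn
    obtain ⟨m, rfl⟩ := Nat.exists_eq_add_of_le hn
    set n := 1 + m with hnm
    ext k
    -- RHS
    have hrhs : coeff k (∑ l ∈ Finset.Icc 1 n, C (coeff (l - 1) Cat) * Δ (n - l))
        = coeff m (Cat ^ (k + 2)) := by
      rw [map_sum]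
      have : ∀ l ∈ Finset.Icc 1 n, coeff k (C (coeff (l - 1) Cat) * Δ (n - l))
          = coeff (l - 1) Cat * coeff (n - l) (Cat ^ (k + 1)) := by
        intro l hl
        rw [coeff_C_mul, hΔ, coeff_mk, hdd]
      rw [Finset.sum_congr rfl this]
      have hconv : coeff (m) (Cat * Cat ^ (k + 1))
          = ∑ ij ∈ Finset.HasAntidiagonal.antidiagonal m, coeff ij.1 Cat * coeff ij.2 (Cat ^ (k + 1)) :=
        coeff_mul m Cat (Cat ^ (k + 1))
      rw [Finset.Nat.sum_antidiagonal_eq_sum_range_succ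
        (fun a b => coeff a Cat * coeff b (Cat ^ (k + 1)))] at hconv
      have hre : ∑ l ∈ Finset.Icc 1 n, coeff (l - 1) Cat * coeff (n - l) (Cat ^ (k + 1))
          = ∑ i ∈ Finset.range m.succ, coeff i Cat * coeff (m - i) (Cat ^ (k + 1)) := by
        rw [← Finset.Ico_add_one_right_eq_Icc, Finset.sum_Ico_eq_sum_range]
        apply Finset.sum_congr
        · congr 1; omega
        · intro i _
          have e1 : 1 + i - 1 = i := by omega
          have e2 : n - (1 + i) = m - i := by omega
          rw [e1, e2]
      rw [hre, ← hconv, ← pow_succ']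
    rw [hrhs, sub_mul, one_mul, map_sub, hΔ, coeff_mk, hdd]
    cases k with
    | zero =>
      rw [coeff_zero_X_mul, sub_zero]
      have : coeff n Cat = coeff n (1 + X * Cat ^ 2) := by rw [← hCat]
      rw [pow_one, this, map_add, hnm]
      have h1c : coeff (1 + m) (1 : PowerSeries K) = 0 := by
        rw [coeff_one]; simp
      rw [h1c, zero_add, add_comm 1 m, coeff_succ_X_mul]
    | succ j =>
      rw [coeff_succ_X_mul, coeff_mk, hdd]
      have := hpow j
      have hc : coeff n (Cat ^ (j + 2)) - coeff n (Cat ^ (j + 1))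
          = coeff n (X * Cat ^ (j + 3)) := by rw [← this, map_sub]
      have hnn : n = m + 1 := by omega
      rw [hnn] at hc ⊢
      rw [hc, coeff_succ_X_mul]
end

section
/- If D=T(f|g) is a palindromic Riordan matrix with f_0≠0, g_0≠0 (so f=f_0^2/(f_0-f_1x) and g=f_0(g_0-x)/(f_0-f_1x)), then the coefficients satisfy f_n=f_1·(f_1/f_0)^{n-1} and g_n=g_1·(f_1/f_0)^{n-1} for all n≥1, where g_1=(f_1g_0-f_0)/f_0. -/
open PowerSeries

lemma pal_aux_shift {K : Type*} [Field K] (φ ψ : PowerSeries K) (n k : ℕ) (h : k ≤ n) :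
    coeff n (φ * (X * ψ) ^ k) = coeff (n - k) (φ * ψ ^ k) := by
  rw [mul_pow, show φ * (X ^ k * ψ ^ k) = X ^ k * (φ * ψ ^ k) by ring]
  conv_lhs => rw [show n = (n - k) + k from (Nat.sub_add_cancel h).symm]
  rw [coeff_X_pow_mul]

lemma pal_coeff_one_mul {K : Type*} [Field K] (u v : PowerSeries K) :
    coeff 1 (u * v) = constantCoeff u * coeff 1 v + coeff 1 u * constantCoeff v := by
  rw [coeff_mul]
  rw [show (Finset.HasAntidiagonal.antidiagonal 1 : Finset (ℕ × ℕ)) = {(0,1),(1,0)} by decide]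
  simp [coeff_zero_eq_constantCoeff]

lemma pal_coeff_one_pow {K : Type*} [Field K] (u : PowerSeries K) (n : ℕ) :
    coeff 1 (u ^ (n + 1)) = (n + 1) * (constantCoeff u) ^ n * coeff 1 u := by
  induction n with
  | zero => simp
  | succ m ih =>
      rw [pow_succ, pal_coeff_one_mul, ih, map_pow]
      push_cast
      ring

/-- For a palindromic Riordan matrix `T(f|g)`, the coefficients satisfy
`fₙ = f₁·(f₁/f₀)^{n-1}` and `gₙ = g₁·(f₁/f₀)^{n-1}` for `n ≥ 1`, where
`g₁ = (f₁g₀ - f₀)/f₀`. -/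
theorem palindromic_coefficients {K : Type*} [Field K]
    (f g : PowerSeries K)
    (hf : constantCoeff f ≠ 0) (hg : constantCoeff g ≠ 0)
    (d : ℕ → ℕ → K)
    (hd : ∀ i j, d i j = coeff i ((f * g⁻¹) * (X * g⁻¹) ^ j))
    (hpal : ∀ n k : ℕ, k ≤ n → d n k = d n (n - k)) :
    ∀ n : ℕ, 1 ≤ n →
      coeff n f = coeff 1 f * (coeff 1 f / coeff 0 f) ^ (n - 1) ∧
      coeff n g = ((coeff 1 f * coeff 0 g - coeff 0 f) / coeff 0 f)
          * (coeff 1 f / coeff 0 f) ^ (n - 1) := by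
  set a0 : K := constantCoeff f with ha0def
  set a1 : K := coeff 1 f with ha1def
  set b0 : K := constantCoeff g with hb0def
  set c1 : K := coeff 1 g⁻¹ with hc1def
  have hb0 : b0 ≠ 0 := hg
  have ha0 : a0 ≠ 0 := hf
  have hginv : g⁻¹ * g = 1 := PowerSeries.inv_mul_cancel g hg
  have hfinv : f⁻¹ * f = 1 := PowerSeries.inv_mul_cancel f hf
  -- constant coefficient of g⁻¹
  have hcg : constantCoeff g⁻¹ = b0⁻¹ := PowerSeries.constantCoeff_inv g
  -- Step 1 : coefficients of f * g⁻¹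
  have h1 : ∀ n : ℕ, coeff n (f * g⁻¹) = a0 * (b0⁻¹) ^ (n + 1) := by
    intro n
    have e0 : d n 0 = coeff n (f * g⁻¹) := by
      rw [hd n 0, pow_zero, mul_one]
    have en : d n n = a0 * (b0⁻¹) ^ (n + 1) := by
      rw [hd n n, pal_aux_shift _ _ n n le_rfl, Nat.sub_self,
        coeff_zero_eq_constantCoeff, map_mul, map_mul, map_pow, hcg]
      rw [← ha0def]
      ring
    have := hpal n 0 (Nat.zero_le n)
    rw [Nat.sub_zero] at this
    rw [← e0, this, en]
  -- Step 2 : (C b0 - X) * (f * g⁻¹) = C a0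
  have E1 : (C b0 - X) * (f * g⁻¹) = C a0 := by
    ext n
    cases n with
    | zero =>
        simp only [coeff_zero_eq_constantCoeff, map_mul, map_sub, constantCoeff_C,
          constantCoeff_X, sub_zero, constantCoeff_inv, ← hb0def, ← ha0def]
        field_simp
    | succ m =>
        rw [sub_mul, map_sub, coeff_C_mul, coeff_succ_X_mul, h1, h1, coeff_C]
        simp only [Nat.succ_ne_zero, if_false]
        field_simp
        linear_combination (a0 * b0⁻¹ * b0⁻¹ ^ m) * mul_inv_cancel₀ hb0
  -- multiply by g : (C b0 - X) * f = C a0 * g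
  have E1f : (C b0 - X) * f = C a0 * g := by
    calc (C b0 - X) * f = ((C b0 - X) * (f * g⁻¹)) * g := by
          rw [show ((C b0 - X) * (f * g⁻¹)) * g = ((C b0 - X) * f) * (g⁻¹ * g) by ring,
            hginv, mul_one]
      _ = C a0 * g := by rw [E1]
  -- multiply by f⁻¹ : (C b0 - X) * g⁻¹ = C a0 * f⁻¹
  have Einv : (C b0 - X) * g⁻¹ = C a0 * f⁻¹ := by
    calc (C b0 - X) * g⁻¹ = ((C b0 - X) * (f * g⁻¹)) * f⁻¹ := by
          rw [show ((C b0 - X) * (f * g⁻¹)) * f⁻¹ = ((C b0 - X) * g⁻¹) * (f⁻¹ * f) by ring,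
            hfinv, mul_one]
      _ = C a0 * f⁻¹ := by rw [E1]
  -- coefficient recurrence relating g to f
  have hA : ∀ n : ℕ, b0 * coeff (n + 1) f - coeff n f = a0 * coeff (n + 1) g := by
    intro n
    have := congrArg (coeff (n + 1)) E1f
    rwa [sub_mul, map_sub, coeff_C_mul, coeff_succ_X_mul, coeff_C_mul] at this
  -- Step 3 : coefficients of q := f * g⁻¹ * g⁻¹
  have h2 : ∀ m : ℕ, coeff m (f * g⁻¹ * g⁻¹)
      = a0 * ((m + 1 : ℕ) * (b0⁻¹) ^ m * c1) + a1 * (b0⁻¹) ^ (m + 1) := by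
    intro m
    have e1 : d (m + 1) 1 = coeff m (f * g⁻¹ * g⁻¹) := by
      rw [hd, pal_aux_shift _ _ (m + 1) 1 (by omega), pow_one, Nat.add_sub_cancel]
    have em : d (m + 1) m = a0 * ((m + 1 : ℕ) * (b0⁻¹) ^ m * c1) + a1 * (b0⁻¹) ^ (m + 1) := by
      rw [hd, pal_aux_shift _ _ (m + 1) m (by omega), Nat.add_sub_cancel_left,
        show f * g⁻¹ * g⁻¹ ^ m = f * g⁻¹ ^ (m + 1) by ring,
        pal_coeff_one_mul, pal_coeff_one_pow, map_pow, hcg, ← ha0def, ← ha1def, ← hc1def]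
      push_cast
      ring
    have hp := hpal (m + 1) 1 (by omega)
    rw [Nat.add_sub_cancel] at hp
    rw [← e1, hp, em]
  -- Step 4 : (C b0 - X)^2 * q = C (a0*c1*b0^2 + a1*b0) - C a1 * X
  have E2 : (C b0 - X) ^ 2 * (f * g⁻¹ * g⁻¹)
      = C (a0 * c1 * b0 ^ 2 + a1 * b0) - C a1 * X := by
    set q : PowerSeries K := f * g⁻¹ * g⁻¹ with hq
    have expand : (C b0 - X) ^ 2 * q
        = C b0 * (C b0 * q) - C b0 * (X * q) - X * (C b0 * q) + X * (X * q) := by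
      ring
    ext n
    rw [expand]
    match n with
    | 0 =>
        simp only [map_add, map_sub, coeff_C_mul, coeff_zero_X_mul, coeff_C, coeff_X,
          mul_zero, sub_zero, add_zero, reduceIte]
        rw [h2 0]
        push_cast
        field_simp
        ring
    | 1 =>
        simp only [map_add, map_sub, coeff_C_mul, coeff_succ_X_mul, coeff_zero_X_mul,
          coeff_C, coeff_X, reduceIte]
        rw [h2 1, h2 0]
        push_cast
        field_simp
        ring
    | (m + 2) =>
        simp only [map_add, map_sub, coeff_C_mul, coeff_succ_X_mul, coeff_C, coeff_X,
          if_neg (show ¬ (m + 2 = 0) by omega), if_neg (show ¬ (m + 2 = 1) by omega),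
          mul_zero, sub_zero]
        rw [h2 (m + 2), h2 (m + 1), h2 m]
        push_cast
        simp only [pow_add, pow_one]
        generalize (b0⁻¹ : K) ^ m = u
        have hb : (b0 : K) * b0⁻¹ = 1 := mul_inv_cancel₀ hb0
        linear_combination (a0 * c1 * u * (((m : K) + 3) * (b0 * b0⁻¹) - ((m : K) + 1))
          + a1 * u * b0⁻¹ * (b0 * b0⁻¹ - 1)) * hb
  -- Step 5 : identify the left side of E2
  have E2L : (C b0 - X) ^ 2 * (f * g⁻¹ * g⁻¹) = C (a0 ^ 2) * f⁻¹ := by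
    calc (C b0 - X) ^ 2 * (f * g⁻¹ * g⁻¹)
        = ((C b0 - X) * (f * g⁻¹)) * ((C b0 - X) * g⁻¹) := by ring
      _ = C a0 * f⁻¹ * (C a0) := by rw [E1, Einv]; ring
      _ = C (a0 ^ 2) * f⁻¹ := by rw [pow_two, map_mul]; ring
  -- Step 6 : the functional equation for f
  have Efinal : C (a0 ^ 2) = (C (a0 * c1 * b0 ^ 2 + a1 * b0) - C a1 * X) * f := by
    have h := E2L.symm.trans E2
    calc C (a0 ^ 2) = C (a0 ^ 2) * (f⁻¹ * f) := by rw [hfinv, mul_one]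
      _ = (C (a0 ^ 2) * f⁻¹) * f := by ring
      _ = (C (a0 * c1 * b0 ^ 2 + a1 * b0) - C a1 * X) * f := by rw [h]
  set s : K := a0 * c1 * b0 ^ 2 + a1 * b0 with hsdef
  have hs : s * a0 = a0 * a0 := by
    have := congrArg (constantCoeff) Efinal
    simp only [map_mul, map_sub, constantCoeff_C, constantCoeff_X, mul_zero, sub_zero,
      ← ha0def] at this
    rw [← this]; ring
  have hs' : s = a0 := mul_right_cancel₀ ha0 hs
  have hrec : ∀ n : ℕ, a0 * coeff (n + 1) f = a1 * coeff n f := by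
    intro n
    have h := congrArg (coeff (n + 1)) Efinal
    rw [coeff_C, if_neg (Nat.succ_ne_zero n), sub_mul, map_sub, coeff_C_mul,
      mul_assoc, coeff_C_mul, coeff_succ_X_mul, hs'] at h
    linear_combination -h
  -- coefficients of f
  have hfc : ∀ m : ℕ, coeff (m + 1) f = a1 * (a1 / a0) ^ m := by
    intro m
    induction m with
    | zero =>
        have h := hrec 0
        rw [coeff_zero_eq_constantCoeff, ← ha0def] at h
        refine mul_left_cancel₀ ha0 ?_
        rw [h]; ring
    | succ k ih =>
        have h := hrec (k + 1)
        rw [ih] at h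
        refine mul_left_cancel₀ ha0 ?_
        rw [h]
        field_simp
        linear_combination -(a1 ^ 2 * a1 ^ k * a0⁻¹ ^ k) * mul_inv_cancel₀ ha0
  have hfc0 : ∀ m : ℕ, coeff m f = a0 * (a1 / a0) ^ m := by
    intro m
    match m with
    | 0 => simp [coeff_zero_eq_constantCoeff, ← ha0def]
    | k + 1 =>
        rw [hfc k]
        field_simp
        linear_combination -(a1 * a1 ^ k * a0⁻¹ ^ k) * mul_inv_cancel₀ ha0
  -- coefficients of g
  have hgc : ∀ m : ℕ, coeff (m + 1) g = ((a1 * b0 - a0) / a0) * (a1 / a0) ^ m := by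
    intro m
    have h := hA m
    rw [hfc m, hfc0 m] at h
    refine mul_left_cancel₀ ha0 ?_
    rw [← h]
    field_simp
  intro n hn
  obtain ⟨m, rfl⟩ : ∃ m, n = m + 1 := ⟨n - 1, by omega⟩
  rw [Nat.add_sub_cancel]
  simp only [coeff_zero_eq_constantCoeff]
  exact ⟨hfc m, hgc m⟩
end

section
/- Let D=T(f|g) be a palindromic Riordan matrix with f_0≠0, g_0≠0, and let p_n(t)=Σ_{k=0}^n d_{n,k}t^k be its row polynomials. Then p_0(t)=f_0/g_0, p_1(t)=(f_0/g_0^2)(1+t), and for n≥2, g_0·p_n(t)=(1+t)·p_{n-1}(t) - (f_1/f_0)·t·p_{n-2}(t). -/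
open PowerSeries

/-- Row polynomials of a palindromic Riordan matrix satisfy
`p₀ = f₀/g₀`, `p₁ = (f₀/g₀²)(1+t)`, and
`g₀·pₙ = (1+t)·p_{n-1} - (f₁/f₀)·t·p_{n-2}` for `n ≥ 2`. -/
theorem palindromic_row_polynomials {K : Type*} [Field K]
    (f g : PowerSeries K)
    (hf : constantCoeff f ≠ 0) (hg : constantCoeff g ≠ 0)
    (d : ℕ → ℕ → K)
    (hd : ∀ i j, d i j = coeff i ((f * g⁻¹) * (X * g⁻¹) ^ j))
    (hpal : ∀ n k : ℕ, k ≤ n → d n k = d n (n - k))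
    (p : ℕ → Polynomial K)
    (hp : ∀ n, p n = ∑ k ∈ Finset.range (n + 1), Polynomial.C (d n k) * Polynomial.X ^ k) :
    p 0 = Polynomial.C (coeff 0 f / coeff 0 g) ∧
    p 1 = Polynomial.C (coeff 0 f / (coeff 0 g) ^ 2) * (1 + Polynomial.X) ∧
    ∀ n : ℕ, 2 ≤ n →
      Polynomial.C (coeff 0 g) * p n
        = (1 + Polynomial.X) * p (n - 1)
          - Polynomial.C (coeff 1 f / coeff 0 f) * Polynomial.X * p (n - 2) := by
  simp only [coeff_zero_eq_constantCoeff]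
  set a := constantCoeff f with ha
  set b := constantCoeff g with hb
  set f1 := coeff 1 f with hf1
  set g1 := coeff 1 g with hg1
  have hwg : g⁻¹ * g = 1 := PowerSeries.inv_mul_cancel g hg
  have hw0 : constantCoeff g⁻¹ = b⁻¹ := PowerSeries.constantCoeff_inv g
  -- rearranged form of the matrix entries
  have hF : ∀ i j, d i j = coeff i ((f * g⁻¹ * g⁻¹ ^ j) * X ^ j) := by
    intro i j
    rw [hd, mul_pow]
    ring_nf
  -- diagonal entries
  have hdiag : ∀ n, d n n = a * (b⁻¹) ^ (n + 1) := by
    intro n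
    rw [hF, coeff_mul_X_pow', if_pos le_rfl, Nat.sub_self, coeff_zero_eq_constantCoeff,
      map_mul, map_mul, map_pow, hw0, pow_succ]
    ring
  -- entries above the diagonal vanish
  have hvanish : ∀ n j, n < j → d n j = 0 := by
    intro n j h
    rw [hF, coeff_mul_X_pow', if_neg (by omega)]
  -- coefficients of u = f/g
  have hu : ∀ n, coeff n (f * g⁻¹) = a * (b⁻¹) ^ (n + 1) := by
    intro n
    have h0 := hd n 0
    simp only [pow_zero, mul_one] at h0
    rw [← h0, hpal n 0 (Nat.zero_le n), Nat.sub_zero, hdiag]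
  -- (A): (b - X) * (f/g) = a
  have hA : (C b - X) * (f * g⁻¹) = C a := by
    ext n
    rcases n with _ | m
    · simp [coeff_zero_eq_constantCoeff, map_mul, map_sub, hw0, mul_inv_cancel₀ hg, hu]
      field_simp
      exact ha.symm
    · rw [sub_mul, map_sub, coeff_C_mul, coeff_succ_X_mul, hu, hu, coeff_C]
      simp only [Nat.succ_ne_zero, if_false]
      rw [pow_succ (b⁻¹) (m + 1)]
      field_simp
      ring
  -- (A'): (b - X) * f = a * g
  have hA' : (C b - X) * f = C a * g := by
    have h := congrArg (· * g) hA
    calc (C b - X) * f = (C b - X) * (f * g⁻¹) * g := by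
          rw [mul_assoc, mul_assoc, hwg, mul_one]
      _ = C a * g := h
  -- coefficient 1 of (A')
  have hfact1 : b * f1 - a = a * g1 := by
    have h := congrArg (coeff 1) hA'
    rw [sub_mul, map_sub, coeff_C_mul, coeff_succ_X_mul, coeff_C_mul,
      coeff_zero_eq_constantCoeff] at h
    linear_combination h
  -- the key palindromy consequence: coeff 1 (u * g⁻¹ ^ m) = coeff m (u * g⁻¹)
  have hL4a : ∀ m, coeff 1 (f * g⁻¹ * g⁻¹ ^ m) = coeff m (f * g⁻¹ * g⁻¹) := by
    intro m
    have h1 : coeff 1 (f * g⁻¹ * g⁻¹ ^ m) = d (m + 1) m := by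
      rw [hF (m + 1) m, coeff_mul_X_pow', if_pos (by omega)]
      norm_num
    have h2 : d (m + 1) 1 = coeff m (f * g⁻¹ * g⁻¹) := by
      rw [hd (m + 1) 1, pow_one,
        show (f * g⁻¹) * (X * g⁻¹) = (f * g⁻¹ * g⁻¹) * X by ring, coeff_succ_mul_X]
    have h3 : d (m + 1) 1 = d (m + 1) m := by
      have := hpal (m + 1) 1 (by omega)
      simpa using this
    rw [h1, ← h3, h2]
  -- recurrence for coefficients of v = f/g²
  have hL4 : ∀ m, coeff m (f * g⁻¹ * g⁻¹)
      = g1 * (a * b⁻¹ * b⁻¹ ^ (m + 1)) + coeff (m + 1) (f * g⁻¹ * g⁻¹) * b := by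
    intro m
    have hq : f * g⁻¹ * g⁻¹ ^ m = g * (f * g⁻¹ * g⁻¹ ^ (m + 1)) := by
      rw [pow_succ, show g * (f * g⁻¹ * (g⁻¹ ^ m * g⁻¹)) = (g⁻¹ * g) * (f * g⁻¹ * g⁻¹ ^ m) by
        ring, hwg, one_mul]
    have h := hL4a m
    rw [hq, coeff_one_mul, hL4a (m + 1)] at h
    have hcc : constantCoeff (f * g⁻¹ * g⁻¹ ^ (m + 1)) = a * b⁻¹ * b⁻¹ ^ (m + 1) := by
      rw [map_mul, map_mul, map_pow, hw0]
    rw [hcc] at h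
    linear_combination -h
  -- coefficients of g⁻¹
  have hw : ∀ m, coeff (m + 1) g⁻¹ = -g1 * (b⁻¹ * b⁻¹ ^ (m + 1)) := by
    intro m
    have hAv : (C b - X) * (f * g⁻¹ * g⁻¹) = C a * g⁻¹ := by
      have h := congrArg (· * g⁻¹) hA
      rw [mul_assoc] at h
      exact h
    have h := congrArg (coeff (m + 1)) hAv
    rw [sub_mul, map_sub, coeff_C_mul, coeff_succ_X_mul, coeff_C_mul] at h
    have h2 : a * coeff (m + 1) g⁻¹ = a * (-g1 * (b⁻¹ * b⁻¹ ^ (m + 1))) := by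
      linear_combination -h - hL4 m
    exact mul_left_cancel₀ hf h2
  -- (B): (b - X) * g⁻¹ = 1 - (f₁/f₀) X
  have hB : (C b - X) * g⁻¹ = 1 - C (f1 / a) * X := by
    ext n
    rcases n with _ | m
    · simp [coeff_zero_eq_constantCoeff, map_sub, map_mul, hw0, mul_inv_cancel₀ hg]
    · rw [sub_mul, map_sub, coeff_C_mul, coeff_succ_X_mul, map_sub, coeff_one,
        show C (f1 / a) * X = X * C (f1 / a) by ring]
      rcases m with _ | m'
      · rw [hw 0, coeff_zero_eq_constantCoeff, hw0, coeff_succ_X_mul,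
          coeff_zero_eq_constantCoeff, constantCoeff_C]
        simp only [Nat.succ_ne_zero, if_false]
        field_simp
        linear_combination hfact1 - g1 * a * (mul_one_div_cancel hg)
      · rw [hw (m' + 1), hw m', coeff_succ_X_mul, coeff_C]
        simp only [Nat.succ_ne_zero, if_false]
        rw [pow_succ (b⁻¹) (m' + 1)]
        field_simp
        ring
  -- master recurrence identity
  have hrec : ∀ k, (C b - X) * ((f * g⁻¹) * (X * g⁻¹) ^ (k + 1))
      = (X - C (f1 / a) * X ^ 2) * ((f * g⁻¹) * (X * g⁻¹) ^ k) := by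
    intro k
    calc (C b - X) * ((f * g⁻¹) * (X * g⁻¹) ^ (k + 1))
        = ((f * g⁻¹) * (X * g⁻¹) ^ k * X) * ((C b - X) * g⁻¹) := by
          rw [pow_succ]; ring
      _ = ((f * g⁻¹) * (X * g⁻¹) ^ k * X) * (1 - C (f1 / a) * X) := by rw [hB]
      _ = (X - C (f1 / a) * X ^ 2) * ((f * g⁻¹) * (X * g⁻¹) ^ k) := by ring
  -- polynomial coefficients are exactly the d's
  have hpc : ∀ n j, (p n).coeff j = d n j := by
    intro n j
    rw [hp, Polynomial.finset_sum_coeff]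
    simp only [Polynomial.coeff_C_mul, Polynomial.coeff_X_pow, mul_ite, mul_one, mul_zero]
    rw [Finset.sum_ite_eq (Finset.range (n + 1)) j (fun k => d n k)]
    by_cases hj : j ≤ n
    · rw [if_pos (Finset.mem_range.mpr (by omega))]
    · rw [if_neg (by simp; omega), hvanish n j (by omega)]
  refine ⟨?_, ?_, ?_⟩
  · rw [hp 0, show (0 : ℕ) + 1 = 1 from rfl, Finset.sum_range_one, pow_zero, mul_one,
      hdiag 0, pow_one, div_eq_mul_inv]
  · rw [hp 1]
    have h10 : d 1 0 = a * b⁻¹ ^ 2 := by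
      rw [hpal 1 0 (by omega)]
      simpa using hdiag 1
    have h11 : d 1 1 = a * b⁻¹ ^ 2 := by simpa using hdiag 1
    rw [Finset.sum_range_succ, Finset.sum_range_one, h10, h11, div_eq_mul_inv, ← inv_pow]
    ring
  · intro n hn
    obtain ⟨m, rfl⟩ : ∃ m, n = m + 2 := ⟨n - 2, by omega⟩
    have e1 : m + 2 - 1 = m + 1 := by omega
    have e2 : m + 2 - 2 = m := by omega
    rw [e1, e2]
    ext j
    rw [Polynomial.coeff_C_mul, Polynomial.coeff_sub, hpc]
    rcases j with _ | jj
    · -- constant coefficient: b * d (m+2) 0 = d (m+1) 0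
      have h := congrArg (coeff (m + 2)) hA
      rw [sub_mul, map_sub, coeff_C_mul, coeff_succ_X_mul, coeff_C] at h
      simp only [Nat.succ_ne_zero, if_false] at h
      have hd0 : ∀ i, coeff i (f * g⁻¹) = d i 0 := by
        intro i; rw [hd i 0]; simp
      rw [hd0, hd0] at h
      rw [Polynomial.mul_coeff_zero, Polynomial.mul_coeff_zero, Polynomial.mul_coeff_zero]
      simp only [Polynomial.coeff_add, Polynomial.coeff_one_zero, Polynomial.coeff_X_zero,
        hpc]
      linear_combination h
    · -- higher coefficients: use the master identity
      have h := congrArg (coeff (m + 2)) (hrec jj)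
      rw [sub_mul, map_sub, coeff_C_mul, coeff_succ_X_mul, sub_mul, map_sub,
        coeff_succ_X_mul, show C (f1 / a) * X ^ 2 * ((f * g⁻¹) * (X * g⁻¹) ^ jj)
          = C (f1 / a) * (X ^ 2 * ((f * g⁻¹) * (X * g⁻¹) ^ jj)) by ring,
        coeff_C_mul, show (m + 2 : ℕ) = m + 2 by rfl] at h
      have hx2 : coeff (m + 2) (X ^ 2 * ((f * g⁻¹) * (X * g⁻¹) ^ jj))
          = coeff m ((f * g⁻¹) * (X * g⁻¹) ^ jj) := coeff_X_pow_mul _ 2 m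
      rw [hx2, ← hd, ← hd, ← hd, ← hd] at h
      have e3 : ((1 + Polynomial.X) * p (m + 1)).coeff (jj + 1)
          = (p (m + 1)).coeff (jj + 1) + (p (m + 1)).coeff jj := by
        rw [add_mul, one_mul, Polynomial.coeff_add, Polynomial.coeff_X_mul]
      have e4 : (Polynomial.C (f1 / a) * Polynomial.X * p m).coeff (jj + 1)
          = f1 / a * (p m).coeff jj := by
        rw [mul_assoc, Polynomial.coeff_C_mul, Polynomial.coeff_X_mul]
      rw [e3, e4, hpc, hpc, hpc]
      linear_combination h
end

section
/- Let D=T(f|g) be a palindromic Riordan matrix with parameters f_0≠0, g_0≠0, f_1 (so f=f_0^2/(f_0-f_1x), g=f_0(g_0-x)/(f_0-f_1x)). Then for all 0≤k≤n, d_{n,k} = (f_0/g_0^{n+1})·Σ_{j=0}^{min(k,n-k)} binom(k,j)·binom(n-j,k)·(−f_1 g_0/f_0)^j. -/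
open PowerSeries

namespace PalinAux

variable {K : Type*} [Field K]

/-- `Sk g₀ k` is `(g₀ - X)⁻(k+1)`. -/
noncomputable def Sk (g₀ : K) (k : ℕ) : PowerSeries K :=
  PowerSeries.mk fun m => ((m + k).choose k : K) * (g₀ ^ (m + k + 1))⁻¹

@[simp] lemma coeff_Sk (g₀ : K) (k m : ℕ) :
    coeff m (Sk g₀ k) = ((m + k).choose k : K) * (g₀ ^ (m + k + 1))⁻¹ := by
  simp [Sk]

lemma Sk_zero_mul {g₀ : K} (hg : g₀ ≠ 0) : Sk g₀ 0 * (C g₀ - X) = 1 := by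
  ext m
  rw [mul_sub, map_sub, coeff_mul_C, coeff_one]
  cases m with
  | zero => simp [hg, coeff_zero_eq_constantCoeff_apply]
  | succ m =>
    rw [coeff_succ_mul_X]
    simp only [coeff_Sk, Nat.add_zero, Nat.choose_zero_right, Nat.cast_one, one_mul]
    rw [if_neg (Nat.succ_ne_zero m)]
    field_simp
    ring

lemma Sk_succ_mul {g₀ : K} (hg : g₀ ≠ 0) (k : ℕ) :
    Sk g₀ (k + 1) * (C g₀ - X) = Sk g₀ k := by
  ext m
  rw [mul_sub, map_sub, coeff_mul_C]
  cases m with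
  | zero =>
    simp only [coeff_zero_eq_constantCoeff_apply, map_mul, constantCoeff_X, mul_zero, sub_zero]
    rw [← coeff_zero_eq_constantCoeff_apply, ← coeff_zero_eq_constantCoeff_apply]
    simp only [coeff_Sk]
    simp only [Nat.zero_add, Nat.choose_self, Nat.cast_one, one_mul]
    field_simp
    ring
  | succ m =>
    rw [coeff_succ_mul_X]
    simp only [coeff_Sk]
    have hch : (m + 1 + (k + 1)).choose (k + 1)
        = (m + (k + 1)).choose k + (m + (k + 1)).choose (k + 1) := by
      have : m + 1 + (k + 1) = (m + (k + 1)) + 1 := by omega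
      rw [this, Nat.choose_succ_succ']
    rw [hch]
    have h1 : m + 1 + k = m + (k + 1) := by omega
    rw [h1]
    push_cast
    field_simp
    ring

lemma Sk_mul_pow {g₀ : K} (hg : g₀ ≠ 0) (k : ℕ) :
    Sk g₀ k * (C g₀ - X) ^ (k + 1) = 1 := by
  induction k with
  | zero => simpa using Sk_zero_mul hg
  | succ k ih =>
    have : Sk g₀ (k + 1) * (C g₀ - X) ^ (k + 2)
        = (Sk g₀ (k + 1) * (C g₀ - X)) * (C g₀ - X) ^ (k + 1) := by ring
    rw [this, Sk_succ_mul hg, ih]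

lemma Q_ne_zero {g₀ : K} (hg : g₀ ≠ 0) : (C g₀ - X : PowerSeries K) ≠ 0 := by
  intro h
  apply hg
  have := congrArg (constantCoeff) h
  simpa using this

lemma Sk_eq_pow {g₀ : K} (hg : g₀ ≠ 0) (k : ℕ) :
    Sk g₀ k = (Sk g₀ 0) ^ (k + 1) := by
  have hQ := pow_ne_zero (k + 1) (Q_ne_zero (K := K) hg)
  apply mul_right_cancel₀ hQ
  rw [Sk_mul_pow hg, ← mul_pow, Sk_zero_mul hg, one_pow]

lemma coeff_one_mul' (p q : PowerSeries K) :
    coeff 1 (p * q) = coeff 0 p * coeff 1 q + coeff 1 p * coeff 0 q := by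
  rw [coeff_mul, Finset.Nat.sum_antidiagonal_eq_sum_range_succ_mk]
  simp [Finset.sum_range_succ]

lemma coeff_binom (c dd : K) (k j : ℕ) :
    coeff j ((C c + C dd * X) ^ k) = (k.choose j : K) * c ^ (k - j) * dd ^ j := by
  rw [add_comm, add_pow, map_sum]
  have hterm : ∀ i ∈ Finset.range (k + 1),
      coeff j ((C dd * X) ^ i * (C c) ^ (k - i) * (k.choose i : PowerSeries K))
        = if j = i then (k.choose i : K) * c ^ (k - i) * dd ^ i else 0 := by
    intro i _
    have he : (C dd * X) ^ i * (C c) ^ (k - i) * (k.choose i : PowerSeries K)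
        = C ((k.choose i : K) * c ^ (k - i) * dd ^ i) * X ^ i := by
      rw [mul_pow, ← map_pow, ← map_pow, ← map_natCast (C) (k.choose i), map_mul, map_mul]
      ring
    rw [he, coeff_C_mul_X_pow]
  rw [Finset.sum_congr rfl hterm, Finset.sum_ite_eq]
  by_cases hj : j ∈ Finset.range (k + 1)
  · rw [if_pos hj]
  · rw [if_neg hj]
    have : k < j := by simp only [Finset.mem_range] at hj; omega
    rw [Nat.choose_eq_zero_of_lt this]
    simp

lemma master {f g : PowerSeries K} (hf : constantCoeff f ≠ 0)
    (hg : constantCoeff g ≠ 0)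
    (hL1 : f * g⁻¹ = C (constantCoeff f) * Sk (constantCoeff g) 0)
    (n k : ℕ) (hk : k ≤ n) :
    coeff n ((f * g⁻¹) * (X * g⁻¹) ^ k)
      = (constantCoeff f) ^ (k + 1)
        * coeff (n - k) ((f⁻¹) ^ k * Sk (constantCoeff g) k) := by
  set f₀ := constantCoeff f
  set g₀ := constantCoeff g
  have hginv : g⁻¹ = f⁻¹ * (C f₀ * Sk g₀ 0) := by
    calc g⁻¹ = (f⁻¹ * f) * g⁻¹ := by rw [PowerSeries.inv_mul_cancel f hf, one_mul]
    _ = f⁻¹ * (f * g⁻¹) := by ring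
    _ = f⁻¹ * (C f₀ * Sk g₀ 0) := by rw [hL1]
  have key : (f * g⁻¹) * (X * g⁻¹) ^ k
      = C (f₀ ^ (k + 1)) * (X ^ k * ((f⁻¹) ^ k * Sk g₀ k)) := by
    rw [Sk_eq_pow hg k]
    conv_lhs => rw [hL1, hginv]
    rw [map_pow]
    ring
  rw [key, coeff_C_mul, coeff_X_pow_mul', if_pos hk]

end PalinAux

open PalinAux

/-- Explicit formula for the entries of a palindromic Riordan matrix:
`d_{n,k} = (f₀/g₀^{n+1})·Σ_{j=0}^{min(k,n-k)} binom(k,j)binom(n-j,k)(-f₁g₀/f₀)ʲ`. -/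
theorem palindromic_entries {K : Type*} [Field K]
    (f g : PowerSeries K)
    (hf : constantCoeff f ≠ 0) (hg : constantCoeff g ≠ 0)
    (d : ℕ → ℕ → K)
    (hd : ∀ i j, d i j = coeff i ((f * g⁻¹) * (X * g⁻¹) ^ j))
    (hpal : ∀ n k : ℕ, k ≤ n → d n k = d n (n - k)) :
    ∀ n k : ℕ, k ≤ n →
      d n k = (coeff 0 f / (coeff 0 g) ^ (n + 1))
        * ∑ j ∈ Finset.range (min k (n - k) + 1),
            (k.choose j : K) * ((n - j).choose k : K)
              * (-(coeff 1 f * coeff 0 g) / coeff 0 f) ^ j := by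
  intro n k hkn
  simp only [coeff_zero_eq_constantCoeff_apply]
  set f₀ := constantCoeff f with hf₀def
  set g₀ := constantCoeff g with hg₀def
  set f₁ := coeff 1 f with hf₁def
  -- Step A: the zeroth column determines f/g
  have hA : ∀ m : ℕ, coeff m (f * g⁻¹) = f₀ * (g₀ ^ (m + 1))⁻¹ := by
    intro m
    have h0 : d m 0 = coeff m (f * g⁻¹) := by simpa using hd m 0
    have hmm : d m m = f₀ * (g₀ ^ (m + 1))⁻¹ := by
      rw [hd m m]
      have he : (f * g⁻¹) * (X * g⁻¹) ^ m = X ^ m * (f * (g⁻¹) ^ (m + 1)) := by ring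
      rw [he, coeff_X_pow_mul', if_pos le_rfl, Nat.sub_self,
        coeff_zero_eq_constantCoeff_apply, map_mul, map_pow, PowerSeries.constantCoeff_inv,
        inv_pow]
    have hp := hpal m 0 (Nat.zero_le m)
    rw [Nat.sub_zero] at hp
    rw [← h0, hp, hmm]
  have hL1 : f * g⁻¹ = C f₀ * Sk g₀ 0 := by
    ext m
    rw [hA m, coeff_C_mul, coeff_Sk]
    simp
  have hmaster : ∀ n k : ℕ, k ≤ n → d n k
      = f₀ ^ (k + 1) * coeff (n - k) ((f⁻¹) ^ k * Sk g₀ k) := by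
    intro n k hk
    rw [hd n k, master hf hg hL1 n k hk]
  -- coefficients of f⁻¹
  have hv0 : coeff 0 f⁻¹ = f₀⁻¹ := by
    rw [coeff_zero_eq_constantCoeff_apply, PowerSeries.constantCoeff_inv]
  have hv1 : coeff 1 f⁻¹ = -(f₁ * (f₀ ^ 2)⁻¹) := by
    have h := congrArg (coeff 1) (PowerSeries.inv_mul_cancel f hf)
    rw [coeff_one_mul', coeff_one, if_neg one_ne_zero, hv0, ← hf₁def] at h
    rw [coeff_zero_eq_constantCoeff_apply, ← hf₀def] at h
    field_simp at h ⊢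
    linear_combination h
  have hpow0 : ∀ m : ℕ, coeff 0 ((f⁻¹) ^ m) = (f₀ ^ m)⁻¹ := by
    intro m
    rw [coeff_zero_eq_constantCoeff_apply, map_pow, PowerSeries.constantCoeff_inv, inv_pow]
  have hpow1 : ∀ m : ℕ, coeff 1 ((f⁻¹) ^ m) = -((m : K) * f₁ * (f₀ ^ (m + 1))⁻¹) := by
    intro m
    induction m with
    | zero => simp
    | succ m ih =>
      rw [pow_succ, coeff_one_mul', hpow0, ih, hv0, hv1]
      push_cast
      field_simp
      ring
  -- Step B: palindromicity kills all higher coefficients of f⁻¹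
  have hvanish : ∀ m : ℕ, 2 ≤ m → coeff m f⁻¹ = 0 := by
    intro m
    induction m using Nat.strong_induction_on with
    | _ m ih =>
      intro hm
      have hpalm : d (m + 1) 1 = d (m + 1) m := by
        have := hpal (m + 1) 1 (by omega)
        simpa using this
      rw [hmaster (m + 1) 1 (by omega), hmaster (m + 1) m (by omega)] at hpalm
      simp only [show m + 1 - 1 = m from by omega, show m + 1 - m = 1 from by omega] at hpalm
      have hR : coeff 1 ((f⁻¹) ^ m * Sk g₀ m)
          = (f₀ ^ m)⁻¹ * (((m : K) + 1) * (g₀ ^ (m + 2))⁻¹)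
            + (-((m : K) * f₁ * (f₀ ^ (m + 1))⁻¹)) * (g₀ ^ (m + 1))⁻¹ := by
        rw [coeff_one_mul', hpow0, hpow1, coeff_Sk, coeff_Sk]
        have e1 : (1 + m).choose m = m + 1 := by
          rw [Nat.add_comm]; exact Nat.choose_succ_self_right m
        have e2 : (0 + m).choose m = 1 := by rw [Nat.zero_add]; exact Nat.choose_self m
        rw [e1, e2, show 1 + m + 1 = m + 2 from by omega, show 0 + m + 1 = m + 1 from by omega]
        push_cast
        ring
      have hL : coeff m ((f⁻¹) ^ 1 * Sk g₀ 1)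
          = f₀⁻¹ * (((m : K) + 1) * (g₀ ^ (m + 2))⁻¹)
            + (-(f₁ * (f₀ ^ 2)⁻¹)) * ((m : K) * (g₀ ^ (m + 1))⁻¹)
            + coeff m f⁻¹ * (g₀ ^ 2)⁻¹ := by
        rw [pow_one, coeff_mul, Finset.Nat.sum_antidiagonal_eq_sum_range_succ_mk]
        rw [Finset.sum_range_succ]
        rw [Finset.range_eq_Ico, ← Finset.sum_Ico_consecutive _ (Nat.zero_le 2) hm]
        have hmid : ∑ i ∈ Finset.Ico 2 m,
            coeff i f⁻¹ * coeff (m - i) (Sk g₀ 1) = 0 := by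
          apply Finset.sum_eq_zero
          intro i hi
          rw [Finset.mem_Ico] at hi
          rw [ih i hi.2 hi.1, zero_mul]
        rw [hmid, add_zero]
        have h02 : Finset.Ico 0 2 = Finset.range 2 := by rw [Finset.range_eq_Ico]
        rw [h02, Finset.sum_range_succ, Finset.sum_range_one]
        rw [hv0, hv1, coeff_Sk, coeff_Sk, coeff_Sk]
        simp only [Prod.fst, Prod.snd, Nat.sub_zero, Nat.sub_self,
          show m - 1 + 1 = m from by omega, Nat.choose_one_right, Nat.choose_self]
        push_cast
        ring
      rw [hR, hL] at hpalm
      have hRR : f₀ ^ (m + 1) * ((f₀ ^ m)⁻¹ * (((m : K) + 1) * (g₀ ^ (m + 2))⁻¹)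
            + (-((m : K) * f₁ * (f₀ ^ (m + 1))⁻¹)) * (g₀ ^ (m + 1))⁻¹)
          = f₀ ^ (1 + 1) * (f₀⁻¹ * (((m : K) + 1) * (g₀ ^ (m + 2))⁻¹)
            + (-(f₁ * (f₀ ^ 2)⁻¹)) * ((m : K) * (g₀ ^ (m + 1))⁻¹)) := by
        field_simp
        ring
      have hzero : f₀ ^ (1 + 1) * (coeff m f⁻¹ * (g₀ ^ 2)⁻¹) = 0 := by
        linear_combination hpalm + hRR
      have h2 : coeff m f⁻¹ * (g₀ ^ 2)⁻¹ = 0 :=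
        (mul_eq_zero.mp hzero).resolve_left (pow_ne_zero _ hf)
      have h3 := (mul_eq_zero.mp h2).resolve_right (inv_ne_zero (pow_ne_zero _ hg))
      exact h3
  have hfinv : f⁻¹ = C f₀⁻¹ + C (-(f₁ * (f₀ ^ 2)⁻¹)) * X := by
    ext m
    match m with
    | 0 => simp [hv0, coeff_C]
    | 1 => rw [hv1]; simp [coeff_C]
    | (m + 2) =>
      rw [hvanish (m + 2) (by omega)]
      simp [coeff_C]
  -- final computation
  rw [hmaster n k hkn, hfinv]
  rw [coeff_mul, Finset.Nat.sum_antidiagonal_eq_sum_range_succ_mk]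
  have hsum2 : ∑ j ∈ Finset.range (min k (n - k) + 1),
        (k.choose j : K) * ((n - j).choose k : K) * (-(f₁ * g₀) / f₀) ^ j
      = ∑ j ∈ Finset.range (n - k + 1),
        (k.choose j : K) * ((n - j).choose k : K) * (-(f₁ * g₀) / f₀) ^ j := by
    apply Finset.sum_subset
    · intro j hj
      simp only [Finset.mem_range] at *
      omega
    · intro j hj1 hj2
      simp only [Finset.mem_range] at hj1 hj2
      rw [Nat.choose_eq_zero_of_lt (by omega)]
      simp
  rw [hsum2, Finset.mul_sum, Finset.mul_sum]
  apply Finset.sum_congr rfl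
  intro j hj
  simp only [Finset.mem_range] at hj
  simp only [Prod.fst, Prod.snd]
  rw [coeff_binom, coeff_Sk]
  rw [show n - k - j + k = n - j from by omega]
  by_cases hjk : j ≤ k
  · obtain ⟨a, rfl⟩ : ∃ a, k = j + a := ⟨k - j, by omega⟩
    obtain ⟨e, rfl⟩ : ∃ e, n = j + a + e := ⟨n - (j + a), by omega⟩
    rw [show j + a - j = a from by omega, show j + a + e - j = a + e from by omega]
    rw [neg_pow, neg_pow, div_pow, mul_pow]
    field_simp
    simp only [one_div, inv_pow, one_pow]
    field_simp
    ring
  · rw [Nat.choose_eq_zero_of_lt (by omega)]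
    simp
end

section
/- If D=T(f|g) is palindromic and f_1=0 (with f_0≠0, g_0≠0), then f(x)=f_0, g(x)=g_0-x, and d_{n,k}=(f_0/g_0^{n+1})·binom(n,k) for all 0≤k≤n; i.e. D is a scalar multiple of a rescaled Pascal matrix. -/
open PowerSeries

private lemma sum_split_two {K : Type*} [AddCommMonoid K] (ψ : ℕ → K) (m : ℕ) (hm : 1 ≤ m) :
    ∑ i ∈ Finset.range (m+1), ψ i = ψ 0 + ψ 1 + ∑ i ∈ Finset.Ico 2 (m+1), ψ i := by
  rw [Finset.range_eq_Ico, ← Finset.sum_Ico_consecutive _ (Nat.zero_le 2) (by omega : 2 ≤ m+1)]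
  congr 1
  rw [← Finset.range_eq_Ico, Finset.sum_range_succ, Finset.sum_range_one]

/-- A palindromic Riordan matrix with `f₁ = 0` is a scalar multiple of a rescaled
Pascal matrix: `f = f₀`, `g = g₀ - x`, and `d_{n,k} = (f₀/g₀^{n+1})·binom(n,k)`. -/
theorem palindromic_f1_zero {K : Type*} [Field K]
    (f g : PowerSeries K)
    (hf : constantCoeff f ≠ 0) (hg : constantCoeff g ≠ 0)
    (d : ℕ → ℕ → K)
    (hd : ∀ i j, d i j = coeff i ((f * g⁻¹) * (X * g⁻¹) ^ j))
    (hpal : ∀ n k : ℕ, k ≤ n → d n k = d n (n - k))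
    (hf1 : coeff 1 f = 0) :
    f = C (coeff 0 f) ∧ g = C (coeff 0 g) - X ∧
      ∀ n k : ℕ, k ≤ n →
        d n k = (coeff 0 f / (coeff 0 g) ^ (n + 1)) * (n.choose k : K) := by
  classical
  rw [coeff_zero_eq_constantCoeff_apply f, coeff_zero_eq_constantCoeff_apply g]
  set A := constantCoeff f with hA
  set B := constantCoeff g with hB
  set G := B⁻¹ with hGdef
  have hG0 : G ≠ 0 := inv_ne_zero hg
  have hBG : B * G = 1 := mul_inv_cancel₀ hg
  set c : ℕ → ℕ → K := fun k m => coeff m (f * (g⁻¹)^(k+1)) with hc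
  have hgu : g * g⁻¹ = 1 := PowerSeries.mul_inv_cancel g hg
  have hdc : ∀ m k, d (m+k) k = c k m := by
    intro m k
    rw [hd]
    have h1 : (f * g⁻¹) * (X * g⁻¹) ^ k = X^k * (f * (g⁻¹)^(k+1)) := by
      rw [mul_pow, pow_succ]; ring
    rw [h1, coeff_X_pow_mul]
  have hpal' : ∀ k m, c k m = c m k := by
    intro k m
    rw [← hdc m k, ← hdc k m, Nat.add_comm k m]
    have h1 := hpal (m+k) k (Nat.le_add_left _ _)
    simpa using h1
  have hcg0 : coeff 0 g = B := coeff_zero_eq_constantCoeff_apply g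
  have hc0 : ∀ k, c k 0 = A * G^(k+1) := by
    intro k
    show coeff 0 (f * (g⁻¹)^(k+1)) = A * G^(k+1)
    rw [coeff_zero_eq_constantCoeff_apply, map_mul, map_pow, constantCoeff_inv]
  have hrec : ∀ k m, ∑ i ∈ Finset.range (m+1), coeff i g * c (k+1) (m-i) = c k m := by
    intro k m
    have h : g * (f * (g⁻¹)^(k+1+1)) = f * (g⁻¹)^(k+1) := by
      linear_combination (f * (g⁻¹)^(k+1)) * hgu
    show _ = coeff m (f * (g⁻¹)^(k+1))
    rw [← h, coeff_mul, Finset.Nat.sum_antidiagonal_eq_sum_range_succ_mk]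
  have hrecf : ∀ m, ∑ i ∈ Finset.range (m+1), coeff i g * c 0 (m-i) = coeff m f := by
    intro m
    have h : g * (f * (g⁻¹)^(0+1)) = f := by
      linear_combination f * hgu
    conv_rhs => rw [← h]
    rw [coeff_mul, Finset.Nat.sum_antidiagonal_eq_sum_range_succ_mk]
  have hA0 : A ≠ 0 := hf
  -- g₁ = -1
  have hg1 : coeff 1 g = -1 := by
    have h1 := hrecf 1
    rw [Finset.sum_range_succ, Finset.sum_range_one] at h1
    simp only [Nat.sub_self, Nat.sub_zero] at h1
    rw [hf1, hpal' 0 1, hc0 1, hc0 0, hcg0] at h1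
    have h2 : A * G * (coeff 1 g + 1) = 0 := by
      linear_combination h1 - A*G*hBG
    have h3 : coeff 1 g + 1 = 0 := by
      rcases mul_eq_zero.1 h2 with h | h
      · exact absurd h (mul_ne_zero hA0 hG0)
      · exact h
    linear_combination h3
  -- column 1 formula
  have hcol1 : ∀ k : ℕ, c k 1 = ((k:K)+1) * A * G^(k+2) := by
    intro k
    induction k with
    | zero =>
      rw [hpal' 0 1, hc0 1]; push_cast; ring
    | succ k ih =>
      have h := hrec k 1
      rw [Finset.sum_range_succ, Finset.sum_range_one] at h
      simp only [Nat.sub_self, Nat.sub_zero] at h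
      rw [hcg0, hg1] at h
      have h2 : c (k+1) 1 = G * (c k 1 + c (k+1) 0) := by
        linear_combination G * h - c (k+1) 1 * hBG
      rw [h2, ih, hc0]
      push_cast
      ring
  -- g_N = 0 for N ≥ 2
  have hgN : ∀ N : ℕ, 2 ≤ N → coeff N g = 0 := by
    intro N
    induction N using Nat.strong_induction_on with
    | _ N ih =>
      intro hN
      obtain ⟨M, rfl⟩ : ∃ M, N = M + 2 := ⟨N - 2, by omega⟩
      have h := hrec 0 (M+2)
      rw [sum_split_two _ (M+2) (by omega)] at h
      have hIco : ∑ i ∈ Finset.Ico 2 (M+2+1), coeff i g * c 1 (M+2-i)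
          = coeff (M+2) g * c 1 0 := by
        have := Finset.sum_eq_single_of_mem (s := Finset.Ico 2 (M+2+1))
          (f := fun i => coeff i g * c 1 (M+2-i)) (M+2)
          (Finset.mem_Ico.2 ⟨by omega, by omega⟩)
          (fun i hi hne => by
            have hi' := Finset.mem_Ico.1 hi
            show coeff i g * c 1 (M+2-i) = 0
            rw [ih i (by omega) (by omega), zero_mul])
        simpa using this
      rw [hIco, hcg0, hg1, hc0] at h
      simp only [show M+2-1 = M+1 from rfl] at h
      simp only [Nat.sub_zero] at h
      -- h : B * c 1 (M+2) + (-1) * c 1 (M+1) + coeff (M+2) g * (A*G^2) = c 0 (M+2)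
      rw [hpal' 1 (M+2), hpal' 1 (M+1), hpal' 0 (M+2), hcol1 (M+2), hcol1 (M+1), hc0 (M+2)] at h
      have h2 : coeff (M+2) g * (A * G^2) = 0 := by
        push_cast at h
        linear_combination h - ((M:K)+3) * A * G^(M+3) * hBG
      rcases mul_eq_zero.1 h2 with h3 | h3
      · exact h3
      · exact absurd h3 (mul_ne_zero hA0 (pow_ne_zero _ hG0))
  -- f_N = 0 for N ≥ 2
  have hfN : ∀ N : ℕ, 2 ≤ N → coeff N f = 0 := by
    intro N hN
    obtain ⟨M, rfl⟩ : ∃ M, N = M + 2 := ⟨N - 2, by omega⟩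
    have h := hrecf (M+2)
    rw [sum_split_two _ (M+2) (by omega)] at h
    have hIco : ∑ i ∈ Finset.Ico 2 (M+2+1), coeff i g * c 0 (M+2-i) = 0 := by
      apply Finset.sum_eq_zero
      intro i hi
      have hi' := Finset.mem_Ico.1 hi
      rw [hgN i (by omega), zero_mul]
    rw [hIco, hcg0, hg1] at h
    simp only [show M+2-1 = M+1 from rfl] at h
    simp only [Nat.sub_zero] at h
    rw [hpal' 0 (M+2), hpal' 0 (M+1), hc0 (M+2), hc0 (M+1)] at h
    linear_combination -h + A * G^(M+2) * hBG
  -- full formula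
  have hform : ∀ m k : ℕ, c k m = ((m+k).choose k : K) * A * G^(m+k+1) := by
    intro m
    induction m with
    | zero =>
      intro k
      rw [hc0]
      simp [Nat.choose_self]
    | succ m ihm =>
      intro k
      induction k with
      | zero =>
        rw [hpal' 0 (m+1), hc0 (m+1)]
        simp
      | succ k ihk =>
        have h := hrec k (m+1)
        rw [sum_split_two _ (m+1) (by omega)] at h
        have hIco : ∑ i ∈ Finset.Ico 2 (m+1+1), coeff i g * c (k+1) (m+1-i) = 0 := by
          apply Finset.sum_eq_zero
          intro i hi
          have hi' := Finset.mem_Ico.1 hi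
          rw [hgN i (by omega), zero_mul]
        rw [hIco, hcg0, hg1] at h
        simp only [Nat.sub_zero] at h
        have h' : B * c (k+1) (m+1) + -1 * c (k+1) m + 0 = c k (m+1) := h
        have h2 : c (k+1) (m+1) = G * (c k (m+1) + c (k+1) m) := by
          linear_combination G * h' - c (k+1) (m+1) * hBG
        rw [h2, ihk, ihm (k+1)]
        have hch : (m+1+(k+1)).choose (k+1) = (m+1+k).choose k + (m+1+k).choose (k+1) :=
          Nat.choose_succ_succ (m+1+k) k
        rw [hch]
        have he1 : m + (k+1) = m + 1 + k := by omega
        rw [he1]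
        push_cast
        ring
  refine ⟨?_, ?_, ?_⟩
  · ext n
    rw [coeff_C]
    match n with
    | 0 => simp [hA]
    | 1 => simp [hf1]
    | (N+2) => rw [hfN (N+2) (by omega)]; simp
  · ext n
    rw [map_sub, coeff_C, coeff_X]
    match n with
    | 0 => simp [hcg0]
    | 1 => simp [hg1]
    | (N+2) => rw [hgN (N+2) (by omega)]; simp
  · intro n k hk
    have hn : n = (n-k) + k := by omega
    rw [hn, hdc (n-k) k, hform (n-k) k]
    have he : n - k + k = n := by omega
    rw [he, div_eq_mul_inv, ← inv_pow]
    show ((n.choose k : K)) * A * G^(n+1) = A * G^(n+1) * (n.choose k : K)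
    ring
end

section
/- Let W_n^{(a,b)}(z)=Σ_{m≥0} w_{a,b}(n,m) z^m with w_{a,b}(n,m)=Σ_{k=0}^{min(n,m)} binom(n,k)binom(m,k)a^{n+m-2k}b^k. Then for all n≥0, W_n^{(a,b)}(z)=(a+(b-a^2)z)^n/(1-az)^{n+1} as formal power series, i.e. (1-az)^{n+1}·W_n^{(a,b)}(z)=(a+(b-a^2)z)^n. -/
open PowerSeries

/-- Auxiliary series `M k = ∑_m C(m,k) a^{m-k} z^m`. -/
noncomputable def wabAuxM {R : Type*} [CommRing R] (a : R) (k : ℕ) : R⟦X⟧ :=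
  PowerSeries.mk fun m => (m.choose k : R) * a ^ (m - k)

lemma wabAux_base {R : Type*} [CommRing R] (a : R) :
    (1 - C a * X) * wabAuxM a 0 = 1 := by
  have h : (C a * X) * wabAuxM a 0 = (C a * wabAuxM a 0) * X := by ring
  ext m
  rw [sub_mul, one_mul, map_sub, h]
  cases m with
  | zero => simp [wabAuxM]
  | succ m => simp [wabAuxM, coeff_succ_mul_X, pow_succ, mul_comm]

lemma wabAux_step {R : Type*} [CommRing R] (a : R) (k : ℕ) :
    (1 - C a * X) * wabAuxM a (k + 1) = X * wabAuxM a k := by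
  have h : (C a * X) * wabAuxM a (k + 1) = (C a * wabAuxM a (k + 1)) * X := by ring
  have h2 : X * wabAuxM a k = wabAuxM a k * X := by ring
  ext m
  rw [sub_mul, one_mul, map_sub, h, h2]
  cases m with
  | zero => simp [wabAuxM]
  | succ m =>
    simp only [wabAuxM, coeff_succ_mul_X, coeff_mk, coeff_C_mul]
    rw [Nat.succ_sub_succ, Nat.choose_succ_succ' m k, Nat.cast_add, add_mul]
    rcases le_or_gt (k + 1) m with h | h
    · have : m - k = (m - (k + 1)) + 1 := by omega
      rw [this, pow_succ]; ring
    · rw [Nat.choose_eq_zero_of_lt h]; ring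

lemma wabAux_key {R : Type*} [CommRing R] (a : R) (k : ℕ) :
    (1 - C a * X) ^ (k + 1) * wabAuxM a k = X ^ k := by
  induction k with
  | zero => rw [zero_add, pow_one, wabAux_base, pow_zero]
  | succ k ih =>
    calc (1 - C a * X) ^ (k + 2) * wabAuxM a (k + 1)
        = (1 - C a * X) ^ (k + 1) * ((1 - C a * X) * wabAuxM a (k + 1)) := by ring
      _ = (1 - C a * X) ^ (k + 1) * (X * wabAuxM a k) := by rw [wabAux_step]
      _ = X * ((1 - C a * X) ^ (k + 1) * wabAuxM a k) := by ring
      _ = X ^ (k + 1) := by rw [ih]; ring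

/-- The weighted Delannoy numbers `w_{a,b}(n,m)`. -/
def wab {R : Type*} [CommRing R] (a b : R) (n m : ℕ) : R :=
  ∑ k ∈ Finset.range (min n m + 1),
    (n.choose k : R) * (m.choose k : R) * a ^ (n + m - 2 * k) * b ^ k

lemma wab_decomp {R : Type*} [CommRing R] (a b : R) (n : ℕ) :
    (PowerSeries.mk fun m => wab a b n m)
      = ∑ k ∈ Finset.range (n + 1),
          C ((n.choose k : R) * a ^ (n - k) * b ^ k) * wabAuxM a k := by
  ext m
  rw [coeff_mk, map_sum]
  simp only [coeff_C_mul, wabAuxM, coeff_mk]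
  rw [wab]
  rw [Finset.sum_subset (Finset.range_subset_range.2 (by omega : min n m + 1 ≤ n + 1))]
  · apply Finset.sum_congr rfl
    intro k hk
    simp only [Finset.mem_range] at hk
    rcases le_or_gt k m with hkm | hkm
    · have : n + m - 2 * k = (n - k) + (m - k) := by omega
      rw [this, pow_add]; ring
    · rw [Nat.choose_eq_zero_of_lt hkm]; ring
  · intro k hk1 hk2
    simp only [Finset.mem_range] at hk1 hk2
    have : m < k := by omega
    rw [Nat.choose_eq_zero_of_lt this]; ring

/-- The generating function of row `n`:
`(1-az)^{n+1}·Wₙ(z) = (a+(b-a²)z)ⁿ`, i.e. `Wₙ(z) = (a+(b-a²)z)ⁿ/(1-az)^{n+1}`. -/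
theorem wab_row_genfun {R : Type*} [CommRing R] (a b : R) (n : ℕ) :
    (1 - C a * X) ^ (n + 1) * (PowerSeries.mk fun m => wab a b n m)
      = (C a + C (b - a ^ 2) * X) ^ n := by
  rw [wab_decomp, Finset.mul_sum]
  have key : ∀ k ∈ Finset.range (n + 1),
      (1 - C a * X) ^ (n + 1) * (C ((n.choose k : R) * a ^ (n - k) * b ^ k) * wabAuxM a k)
        = (C b * X) ^ k * (C a * (1 - C a * X)) ^ (n - k) * (n.choose k : R⟦X⟧) := by
    intro k hk
    simp only [Finset.mem_range] at hk
    have hp : n + 1 = (n - k) + (k + 1) := by omega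
    calc (1 - C a * X) ^ (n + 1) * (C ((n.choose k : R) * a ^ (n - k) * b ^ k) * wabAuxM a k)
        = C ((n.choose k : R) * a ^ (n - k) * b ^ k) *
            ((1 - C a * X) ^ (n - k) * ((1 - C a * X) ^ (k + 1) * wabAuxM a k)) := by
          rw [hp, pow_add]; ring
      _ = C ((n.choose k : R) * a ^ (n - k) * b ^ k) * ((1 - C a * X) ^ (n - k) * X ^ k) := by
          rw [wabAux_key]
      _ = (C b * X) ^ k * (C a * (1 - C a * X)) ^ (n - k) * (n.choose k : R⟦X⟧) := by
          rw [map_mul, map_mul, map_pow, map_pow, map_natCast,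
            mul_pow (C b) X, mul_pow (C a)]; ring
  rw [Finset.sum_congr rfl key, ← add_pow]
  have : C b * X + C a * (1 - C a * X) = C a + C (b - a ^ 2) * X := by
    rw [map_sub, map_pow]; ring
  rw [this]
end
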